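/- Consider the 6 × 6 matrix ν (for n = 4) with rows and columns indexed by (2,2),(2,3),(2,4),(3,3),(3,4),(4,4), whose entries are given in terms of curvature components R_{1i1j} as in the RG-2 symbol computation; assume the symmetric 3 × 3 matrix (R_{1i1j})_{2≤i,j≤4} is diagonal with diagonal entries K₂, K₃, K₄. Then ν is diagonal with diagonal entries 1+αK₂, 1+(α/2)(K₂+K₃), 1+(α/2)(K₂+K₄), 1+αK₃, 1+(α/2)(K₃+K₄), 1+αK₄, and det(ν) = (1+αK₂)(1+αK₃)(1+αK₄)(1+(α/2)(K₂+K₃))(1+(α/2)(K₂+K₄))(1+(α/2)(K₃+K₄)). -/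
import Mathlib

/-- The explicit `6 × 6` block `ν` of the RG-2 symbol in dimension `4`, with rows
and columns ordered `(2,2),(2,3),(2,4),(3,3),(3,4),(4,4)`, where `K₂,K₃,K₄`
denote `R₁₂₁₂, R₁₃₁₃, R₁₄₁₄` and `a = R₁₂₁₃`, `b = R₁₂₁₄`, `c = R₁₃₁₄` are the
mixed curvature components.  If the matrix `(R_{1i1j})` is diagonal, i.e.
`a = b = c = 0`, then `ν` is diagonal with the stated diagonal entries and
`det ν = (1+αK₂)(1+(α/2)(K₂+K₃))(1+(α/2)(K₂+K₄))(1+αK₃)(1+(α/2)(K₃+K₄))(1+αK₄)`. -/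
theorem stmt_11 (α K₂ K₃ K₄ a b c : ℝ)
    (nu : Matrix (Fin 6) (Fin 6) ℝ)
    (hnu : nu = !![1 + α * K₂, α * a, α * b, 0, 0, 0;
      α / 2 * a, 1 + α / 2 * (K₃ + K₂), α / 2 * c, α / 2 * a, α / 2 * b, 0;
      α / 2 * b, α / 2 * c, 1 + α / 2 * (K₂ + K₄), 0, α / 2 * a, α / 2 * b;
      0, α * a, 0, 1 + α * K₃, α * c, 0;
      0, α / 2 * b, α / 2 * a, α / 2 * c, 1 + α / 2 * (K₃ + K₄), α / 2 * c;
      0, 0, α * b, 0, α * c, 1 + α * K₄])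
    (ha : a = 0) (hb : b = 0) (hc : c = 0) :
    nu = Matrix.diagonal ![1 + α * K₂, 1 + α / 2 * (K₂ + K₃), 1 + α / 2 * (K₂ + K₄),
      1 + α * K₃, 1 + α / 2 * (K₃ + K₄), 1 + α * K₄] ∧
    nu.det = (1 + α * K₂) * (1 + α * K₃) * (1 + α * K₄) *
      (1 + α / 2 * (K₂ + K₃)) * (1 + α / 2 * (K₂ + K₄)) * (1 + α / 2 * (K₃ + K₄)) := by
  subst ha hb hc hnu
  rw [mul_zero α, mul_zero (α / 2), add_comm K₃ K₂]
  have h : (!![1 + α * K₂, 0, 0, 0, 0, 0;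
      0, 1 + α / 2 * (K₂ + K₃), 0, 0, 0, 0;
      0, 0, 1 + α / 2 * (K₂ + K₄), 0, 0, 0;
      0, 0, 0, 1 + α * K₃, 0, 0;
      0, 0, 0, 0, 1 + α / 2 * (K₃ + K₄), 0;
      0, 0, 0, 0, 0, 1 + α * K₄] : Matrix (Fin 6) (Fin 6) ℝ) =
      Matrix.diagonal ![1 + α * K₂, 1 + α / 2 * (K₂ + K₃), 1 + α / 2 * (K₂ + K₄),
      1 + α * K₃, 1 + α / 2 * (K₃ + K₄), 1 + α * K₄] := by
    ext i j
    fin_cases i <;> fin_cases j <;> rfl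
  refine ⟨h, ?_⟩
  rw [h, Matrix.det_diagonal, Fin.prod_univ_six]
  show (1 + α * K₂) * (1 + α / 2 * (K₂ + K₃)) * (1 + α / 2 * (K₂ + K₄)) * (1 + α * K₃) *
      (1 + α / 2 * (K₃ + K₄)) * (1 + α * K₄) = _
  ring
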